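/- arXiv:2306.17442 — 2 statements merged into one kernel-verified Lean document; each statement's English description precedes it below -/
import Mathlib

section
/- Let φ denote the standard Gaussian density and Φ its cumulative distribution function. For a > 0, consider the ternary quantizer on the standard Gaussian with threshold a and optimal levels: Q(w) = m for w ≥ a, Q(w) = −m for w ≤ −a, Q(w) = 0 for |w| < a, where m = φ(a)/(1 − Φ(a)) is the conditional mean of the Gaussian on [a, ∞). Then the expected squared quantization error E[(Q(w) − w)²] over the standard Gaussian equals 1 − 2φ(a)²/(1 − Φ(a)). -/
open MeasureTheory Set ProbabilityTheory

/-- The standard Gaussian density. -/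
noncomputable def gaussPdf (x : ℝ) : ℝ := (Real.sqrt (2 * Real.pi))⁻¹ * Real.exp (-x ^ 2 / 2)

/-- The standard Gaussian cumulative distribution function. -/
noncomputable def gaussCdf (a : ℝ) : ℝ := ∫ x in Iic a, gaussPdf x

/-!
With `g(x) = 𝟙[x ≥ a] (m² - 2 m x)` and `a > 0`, the squared error splits pointwise as
`(Q w - w)² = w² + g(w) + g(-w)`. The standard Gaussian is symmetric, so the risk is
`E[w²] + 2 E[g] = 1 + 2 (m² (1 - Φ(a)) - 2 m φ(a))`, the tail mean `∫_a^∞ x φ(x) dx = φ(a)` coming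
from `φ' = -x φ`. Substituting `m = φ(a) / (1 - Φ(a))` gives `1 - 2 φ(a)² / (1 - Φ(a))`.
-/

open Real Filter Topology
open scoped NNReal

lemma gaussPdf_eq_gaussianPDFReal : gaussPdf = gaussianPDFReal 0 1 := by
  ext x; simp [gaussPdf, gaussianPDFReal]

lemma hasDerivAt_gaussPdf (x : ℝ) : HasDerivAt gaussPdf (-x * gaussPdf x) x := by
  have h : HasDerivAt (fun y => -y ^ 2 / 2) (-x) x :=
    ((hasDerivAt_pow 2 x).neg.div_const 2).congr_deriv (by push_cast; ring)
  exact (h.exp.const_mul _).congr_deriv (by simp only [gaussPdf]; ring)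

lemma tendsto_gaussPdf_atTop : Tendsto gaussPdf atTop (𝓝 0) := by
  have h := (tendsto_rpow_abs_mul_exp_neg_mul_sq_cocompact (one_half_pos (α := ℝ)) 0).const_mul
    (√(2 * π))⁻¹
  rw [mul_zero] at h
  refine (h.mono_left atTop_le_cocompact).congr fun x => ?_
  simp only [rpow_zero, one_mul, gaussPdf]; ring_nf

lemma integrable_mul_gaussPdf : Integrable fun x => x * gaussPdf x := by
  refine ((integrable_mul_exp_neg_mul_sq (one_half_pos (α := ℝ))).const_mul (√(2 * π))⁻¹).congr
    (ae_of_all _ fun x => ?_)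
  simp only [gaussPdf]; ring_nf

lemma integral_Ioi_mul_gaussPdf (a : ℝ) : ∫ x in Ioi a, x * gaussPdf x = gaussPdf a := by
  have h := integral_Ioi_of_hasDerivAt_of_tendsto' (a := a) (f' := fun x => x * gaussPdf x)
    (fun x _ => (hasDerivAt_gaussPdf x).neg.congr_deriv (by ring))
    integrable_mul_gaussPdf.integrableOn tendsto_gaussPdf_atTop.neg
  simpa using h

lemma setIntegral_gaussianReal_eq_setIntegral_smul {E : Type*} [NormedAddCommGroup E]
    [NormedSpace ℝ E] {μ : ℝ} {v : ℝ≥0} {f : ℝ → E} {s : Set ℝ} (hv : v ≠ 0)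
    (hs : MeasurableSet s) :
    ∫ x in s, f x ∂gaussianReal μ v = ∫ x in s, gaussianPDFReal μ v x • f x := by
  rw [← integral_indicator hs, integral_gaussianReal_eq_integral_smul hv, ← integral_indicator hs,
    indicator_smul]

lemma setIntegral_Ici_id_gaussianReal (a : ℝ) : ∫ x in Ici a, x ∂gaussianReal 0 1 = gaussPdf a := by
  rw [setIntegral_gaussianReal_eq_setIntegral_smul one_ne_zero measurableSet_Ici,
    integral_Ici_eq_integral_Ioi, ← gaussPdf_eq_gaussianPDFReal, ← integral_Ioi_mul_gaussPdf]
  simp only [smul_eq_mul, mul_comm]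

lemma measureReal_Ici_gaussianReal (a : ℝ) : (gaussianReal 0 1).real (Ici a) = 1 - gaussCdf a := by
  rw [← compl_Iio, probReal_compl_eq_one_sub measurableSet_Iio, measureReal_def,
    gaussianReal_apply_eq_integral 0 one_ne_zero,
    ENNReal.toReal_ofReal
      (setIntegral_nonneg measurableSet_Iio fun x _ => gaussianPDFReal_nonneg 0 1 x),
    gaussCdf, integral_Iic_eq_integral_Iio, gaussPdf_eq_gaussianPDFReal]

lemma integrable_id_gaussianReal {μ : ℝ} {v : ℝ≥0} : Integrable (fun x => x) (gaussianReal μ v) :=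
  (memLp_id_gaussianReal 1).integrable le_rfl

lemma setIntegral_Ici_gaussianReal_sub_mul (a b c : ℝ) :
    ∫ x in Ici a, (c - b * x) ∂gaussianReal 0 1 = c * (1 - gaussCdf a) - b * gaussPdf a := by
  rw [integral_sub (integrable_const c).integrableOn
      (integrable_id_gaussianReal.const_mul b).integrableOn,
    setIntegral_const, integral_const_mul, measureReal_Ici_gaussianReal,
    setIntegral_Ici_id_gaussianReal, smul_eq_mul, mul_comm]

lemma integral_comp_neg_gaussianReal {E : Type*} [NormedAddCommGroup E] [NormedSpace ℝ E]
    (v : ℝ≥0) (f : ℝ → E) :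
    ∫ x, f (-x) ∂gaussianReal 0 v = ∫ x, f x ∂gaussianReal 0 v := by
  conv_rhs => rw [← neg_zero, ← gaussianReal_map_neg]
  exact (integral_map_equiv (MeasurableEquiv.neg ℝ) f).symm

lemma MeasureTheory.Integrable.comp_neg_gaussianReal {E : Type*} [NormedAddCommGroup E]
    {v : ℝ≥0} {f : ℝ → E}
    (hf : Integrable f (gaussianReal 0 v)) : Integrable (fun x => f (-x)) (gaussianReal 0 v) := by
  rw [← neg_zero, ← gaussianReal_map_neg] at hf
  exact (integrable_map_equiv (MeasurableEquiv.neg ℝ) f).1 hf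

lemma integral_sq_gaussianReal (v : ℝ≥0) : ∫ x, x ^ 2 ∂gaussianReal 0 v = v := by
  have h := variance_fun_id_gaussianReal (μ := 0) (v := v)
  rw [variance_eq_integral measurable_id'.aemeasurable] at h
  simpa using h

noncomputable def ternaryQuantizer (a m w : ℝ) : ℝ := if a ≤ w then m else if w ≤ -a then -m else 0

lemma ternaryQuantizer_sub_sq {a : ℝ} (ha : 0 < a) (m w : ℝ) :
    (ternaryQuantizer a m w - w) ^ 2 = w ^ 2 + (Ici a).indicator (fun x => m ^ 2 - 2 * m * x) w
      + (Ici a).indicator (fun x => m ^ 2 - 2 * m * x) (-w) := by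
  unfold ternaryQuantizer
  split_ifs with h₁ h₂
  · rw [indicator_of_mem (mem_Ici.2 h₁), indicator_of_notMem (by simp only [mem_Ici]; linarith)]
    ring
  · rw [indicator_of_notMem (by simp only [mem_Ici]; linarith),
      indicator_of_mem (by simp only [mem_Ici]; linarith)]
    ring
  · rw [indicator_of_notMem (mt mem_Ici.1 h₁),
      indicator_of_notMem (by simp only [mem_Ici]; linarith)]
    ring

lemma integral_ternaryQuantizer_sub_sq_gaussianReal {a : ℝ} (ha : 0 < a) (m : ℝ) :
    ∫ w, (ternaryQuantizer a m w - w) ^ 2 ∂gaussianReal 0 1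
      = 1 + 2 * (m ^ 2 * (1 - gaussCdf a) - 2 * m * gaussPdf a) := by
  set g := (Ici a).indicator (fun x => m ^ 2 - 2 * m * x)
  have hsq : Integrable (fun x => x ^ 2) (gaussianReal 0 1) :=
    (memLp_id_gaussianReal 2).integrable_sq
  have hg : Integrable g (gaussianReal 0 1) :=
    ((integrable_const _).sub (integrable_id_gaussianReal.const_mul (2 * m))).indicator
      measurableSet_Ici
  simp_rw [ternaryQuantizer_sub_sq ha]
  change ∫ w, w ^ 2 + g w + g (-w) ∂gaussianReal 0 1 = _
  rw [integral_add (f := fun w => w ^ 2 + g w) (hsq.add hg) hg.comp_neg_gaussianReal,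
    integral_add hsq hg, integral_comp_neg_gaussianReal 1 g, integral_sq_gaussianReal,
    integral_indicator measurableSet_Ici, setIntegral_Ici_gaussianReal_sub_mul]
  push_cast; ring

/-- Expected squared error of the optimal symmetric ternary quantizer with
threshold `a` under the standard Gaussian prior: it equals `1 - 2φ(a)²/(1 - Φ(a))`. -/
theorem stmt_6 (a : ℝ) (ha : 0 < a)
    (m : ℝ) (hm : m = gaussPdf a / (1 - gaussCdf a))
    (Q : ℝ → ℝ)
    (hQ : ∀ w : ℝ, Q w = if a ≤ w then m else if w ≤ -a then -m else 0) :
    (∫ w, (Q w - w) ^ 2 ∂(gaussianReal 0 1))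
      = 1 - 2 * gaussPdf a ^ 2 / (1 - gaussCdf a) := by
  rw [show Q = ternaryQuantizer a m from funext hQ,
    integral_ternaryQuantizer_sub_sq_gaussianReal ha, hm]
  -- If `1 - Φ(a) = 0`, then `m = 0` by the convention `x / 0 = 0` and both sides are `1`.
  rcases eq_or_ne (1 - gaussCdf a) 0 with hT | hT
  · simp [hT]
  · field_simp
    ring
end

section
/- Let λ > 0. For every function g : [−λ, λ] → ℝ whose range contains at most 3 values, there exists w ∈ [−λ, λ] with |w − g(w)| ≥ λ/3. Consequently, the TQuant quantizer, whose reconstruction levels are −2λ/3, 0, 2λ/3 with thresholds ±λ/3, achieves the minimal possible worst-case error λ/3 among all ternary (three-level) quantizers on [−λ, λ]. -/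
/-!
If a quantizer `g` with at most `n` levels had error `< (b - a) / (2n)` everywhere on `[a, b]`,
it would be injective on the `n + 1` equally spaced points `a + k (b - a) / n`, whose mutual
distances are at least `(b - a) / n`; pigeonhole forbids this. For `n = 3` on `[-λ, λ]` the
bound is `λ / 3`, and the TQuant quantizer attains it.
-/

open Set

theorem exists_le_dist_apply_of_card_lt {α ι : Type*} [PseudoMetricSpace α] [Fintype ι]
    {ε : ℝ} {x : ι → α} (hx : Pairwise fun i j => 2 * ε ≤ dist (x i) (x j))
    {g : α → α} {S : Finset α} (hg : ∀ i, g (x i) ∈ S) (hS : S.card < Fintype.card ι) :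
    ∃ i, ε ≤ dist (x i) (g (x i)) := by
  by_contra! hclose
  have hinj : InjOn (g ∘ x) (Finset.univ : Finset ι) := by
    intro i _ j _ hij
    by_contra hne
    have hij : g (x i) = g (x j) := hij
    have : dist (x i) (x j) < 2 * ε :=
      calc dist (x i) (x j) ≤ dist (x i) (g (x i)) + dist (x j) (g (x i)) :=
            dist_triangle_right _ _ _
        _ = dist (x i) (g (x i)) + dist (x j) (g (x j)) := by rw [hij]
        _ < 2 * ε := by linarith [hclose i, hclose j]
    exact (hx hne).not_gt this
  have := Finset.card_le_card_of_injOn (g ∘ x) (fun i _ => hg i) hinj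
  rw [Finset.card_univ] at this
  omega

theorem one_le_abs_natCast_sub_natCast {i j : ℕ} (h : i ≠ j) : 1 ≤ |(i : ℝ) - j| := by
  have : ((i : ℤ) - j : ℤ) ≠ 0 := sub_ne_zero.2 (by exact_mod_cast h)
  exact_mod_cast Int.one_le_abs this

theorem exists_le_abs_sub_apply_of_card_le {a b : ℝ} (hab : a ≤ b) {n : ℕ} {g : ℝ → ℝ}
    {S : Finset ℝ} (hS : S.card ≤ n) (hg : ∀ w ∈ Icc a b, g w ∈ S) :
    ∃ w ∈ Icc a b, (b - a) / (2 * n) ≤ |w - g w| := by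
  set d := (b - a) / n
  have hd : 0 ≤ d := div_nonneg (sub_nonneg.2 hab) n.cast_nonneg
  let x : Fin (n + 1) → ℝ := fun k => a + k * d
  have hx_mem (k : Fin (n + 1)) : x k ∈ Icc a b := by
    have hk : (k : ℝ) ≤ n := by exact_mod_cast k.is_le
    have hnd : n * d ≤ b - a := by
      rcases n.eq_zero_or_pos with rfl | hn
      · simpa using hab
      · rw [mul_div_cancel₀ _ (by positivity)]
    constructor <;> nlinarith [mul_le_mul_of_nonneg_right hk hd]
  have hx_sep : Pairwise fun i j => 2 * ((b - a) / (2 * n)) ≤ dist (x i) (x j) := by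
    intro i j hij
    have h1 := one_le_abs_natCast_sub_natCast (Fin.val_injective.ne hij)
    rw [Real.dist_eq, show x i - x j = ((i : ℕ) - (j : ℕ) : ℝ) * d by simp [x]; ring, abs_mul,
      abs_of_nonneg hd, ← mul_div_assoc, mul_div_mul_left _ _ two_ne_zero]
    exact le_mul_of_one_le_left hd h1
  obtain ⟨k, hk⟩ := exists_le_dist_apply_of_card_lt hx_sep (fun k => hg _ (hx_mem k))
    (by simpa using Nat.lt_succ_of_le hS)
  exact ⟨x k, hx_mem k, hk⟩

noncomputable def tquant (lam w : ℝ) : ℝ :=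
  if w < -lam / 3 then -(2 * lam / 3) else if w ≤ lam / 3 then 0 else 2 * lam / 3

theorem abs_sub_tquant_le {lam w : ℝ} (hw : w ∈ Icc (-lam) lam) :
    |w - tquant lam w| ≤ lam / 3 := by
  obtain ⟨hlo, hhi⟩ := hw
  unfold tquant
  split_ifs <;> rw [abs_le] <;> constructor <;> linarith

/-- Any three-level quantizer of `[-λ, λ]` has worst-case error at least `λ/3`;
the TQuant quantizer (levels `-2λ/3, 0, 2λ/3`, thresholds `±λ/3`) attains this bound,
hence achieves the minimal possible worst-case error among ternary quantizers. -/
theorem stmt_11 (lam : ℝ) (hlam : 0 < lam) :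
    (∀ g : ℝ → ℝ, (∃ S : Finset ℝ, S.card ≤ 3 ∧ ∀ w ∈ Icc (-lam) lam, g w ∈ S) →
      ∃ w ∈ Icc (-lam) lam, lam / 3 ≤ |w - g w|) ∧
    (∀ w ∈ Icc (-lam) lam,
      |w - (if w < -lam / 3 then -(2 * lam / 3)
        else if w ≤ lam / 3 then 0 else 2 * lam / 3)| ≤ lam / 3) := by
  refine ⟨fun g ⟨S, hS, hg⟩ => ?_, fun w hw => abs_sub_tquant_le hw⟩
  obtain ⟨w, hw, herr⟩ := exists_le_abs_sub_apply_of_card_le (by linarith) hS hg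
  refine ⟨w, hw, le_of_eq_of_le ?_ herr⟩
  push_cast
  ring
end
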